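/- r(I_4, L_3) = 15: every oriented graph on 15 vertices contains an independent set of size 4 or a transitive tournament on 3 vertices, and there exists an oriented graph on 14 vertices containing neither. -/

import Mathlib

/-- An oriented graph: no loops, at most one directed edge per pair
(asymmetry implies irreflexivity). -/
def IsOriented {V : Type*} (E : V → V → Prop) : Prop :=
  ∀ x y, E x y → ¬ E y x

/-- The graph contains an independent set of size `m`. -/
def HasIndep {V : Type*} (E : V → V → Prop) (m : ℕ) : Prop :=
  ∃ s : Finset V, s.card = m ∧ ∀ x ∈ s, ∀ y ∈ s, ¬ E x y

/-- The graph contains a transitive tournament on `n` vertices. -/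
def HasTransTour {V : Type*} (E : V → V → Prop) (n : ℕ) : Prop :=
  ∃ f : Fin n ↪ V, ∀ i j : Fin n, i < j → E (f i) (f j)

/-- `r(I_m, L_n)`: the least `k` such that every oriented graph on `k` vertices
contains an independent set of size `m` or a transitive tournament on `n` vertices. -/
noncomputable def ramseyIL (m n : ℕ) : ℕ :=
  sInf {k | ∀ (V : Type) (_ : Fintype V), Fintype.card V = k →
    ∀ E : V → V → Prop, IsOriented E → HasIndep E m ∨ HasTransTour E n}

/-!
Let `E` be an oriented graph with neither a transitive triple nor four independent vertices.
The out- and in-neighbourhoods of a vertex `v` are independent, so each has at most 3 vertices,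
and its non-neighbourhood `R v` contains no three independent vertices. Inside `R v` a vertex
therefore has at most 2 out-, 2 in- and 3 non-neighbours (the latter form a tournament), so
`|R v| ≤ 8` and `E` has at most 15 vertices, with equality only if all these bounds are attained.

On 15 vertices, give each `n ∈ R v` the weight `w n = |Out n ∩ In v|`. Every `n ∈ R v` has
exactly one out-neighbour outside `R v`, and `Out v` receives exactly 6 edges from `R v`, so the
weights add up to 2. But every `r ∈ R v` has a vertex of positive weight in `R v ∩ R r`, and
each `n` lies in exactly three of these sets, so the weights add up to at least 8/3.

A 3-regular oriented bicirculant on `ℤ/7 × ℤ/2` shows that 14 vertices do not suffice.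
-/

open Finset

section Basic

variable {V W : Type*} {E : V → V → Prop}

def NonAdj (E : V → V → Prop) (x y : V) : Prop := x ≠ y ∧ ¬E x y ∧ ¬E y x

def IsIndep (E : V → V → Prop) (s : Finset V) : Prop := ∀ x ∈ s, ∀ y ∈ s, ¬E x y

structure IsI4L3Free (E : V → V → Prop) : Prop where
  oriented : IsOriented E
  not_transitive : ∀ a b c, E a b → E b c → ¬E a c
  not_hasIndep : ¬HasIndep E 4

theorem NonAdj.symm {x y : V} (h : NonAdj E x y) : NonAdj E y x :=
  ⟨h.1.symm, h.2.2, h.2.1⟩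

variable (E) in
theorem eq_or_adj_or_nonAdj (v x : V) :
    x = v ∨ E v x ∨ E x v ∨ NonAdj E v x := by
  unfold NonAdj
  tauto

theorem IsIndep.nonAdj {s : Finset V} (hs : IsIndep E s) {x y : V} (hx : x ∈ s) (hy : y ∈ s)
    (hxy : x ≠ y) : NonAdj E x y :=
  ⟨hxy, hs x hx y hy, hs y hy x hx⟩

theorem IsIndep.mono {s t : Finset V} (ht : IsIndep E t) (hst : s ⊆ t) : IsIndep E s :=
  fun x hx y hy => ht x (hst hx) y (hst hy)

theorem IsIndep.insert [DecidableEq V] {s : Finset V} {x : V} (hs : IsIndep E s) (hx : ¬E x x)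
    (h : ∀ y ∈ s, ¬E x y ∧ ¬E y x) : IsIndep E (insert x s) := by
  simp only [IsIndep, mem_insert, forall_eq_or_imp]
  exact ⟨⟨hx, fun y hy => (h y hy).1⟩, fun y hy => ⟨(h y hy).2, hs y hy⟩⟩

theorem IsOriented.irrefl (hE : IsOriented E) (x : V) : ¬E x x := fun h => hE x x h h

theorem IsOriented.ne (hE : IsOriented E) {x y : V} (h : E x y) : x ≠ y := by
  rintro rfl
  exact hE.irrefl x h

theorem hasTransTour_three_iff (hE : IsOriented E) :
    HasTransTour E 3 ↔ ∃ a b c, E a b ∧ E b c ∧ E a c := by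
  constructor
  · rintro ⟨f, hf⟩
    exact ⟨f 0, f 1, f 2, hf 0 1 (by decide), hf 1 2 (by decide), hf 0 2 (by decide)⟩
  · rintro ⟨a, b, c, hab, hbc, hac⟩
    refine ⟨⟨![a, b, c], ?_⟩, ?_⟩
    · intro i j hij
      fin_cases i <;> fin_cases j <;> simp_all [eq_comm, hE.ne hab, hE.ne hbc, hE.ne hac]
    · intro i j hij
      fin_cases i <;> fin_cases j <;> first | assumption | simp at hij

theorem HasIndep.of_comap {E : W → W → Prop} (f : V ↪ W) {m : ℕ}
    (h : HasIndep (fun x y => E (f x) (f y)) m) : HasIndep E m := by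
  classical
  obtain ⟨s, hs, hind⟩ := h
  refine ⟨s.map f, by rw [card_map, hs], ?_⟩
  simp only [mem_map]
  rintro _ ⟨x, hx, rfl⟩ _ ⟨y, hy, rfl⟩
  exact hind x hx y hy

theorem HasTransTour.of_comap {E : W → W → Prop} (f : V ↪ W) {n : ℕ}
    (h : HasTransTour (fun x y => E (f x) (f y)) n) : HasTransTour E n := by
  obtain ⟨g, hg⟩ := h
  exact ⟨g.trans f, hg⟩

theorem IsI4L3Free.card_le_three (hE : IsI4L3Free E) {s : Finset V} (hs : IsIndep E s) :
    #s ≤ 3 := by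
  by_contra! h
  obtain ⟨t, hts, ht⟩ := exists_subset_card_eq (show 4 ≤ #s by omega)
  exact hE.not_hasIndep ⟨t, ht, hs.mono hts⟩

theorem IsOriented.hasIndep_four_iff (hE : IsOriented E) :
    HasIndep E 4 ↔ ∃ a b c d, NonAdj E a b ∧ NonAdj E a c ∧ NonAdj E a d ∧
      NonAdj E b c ∧ NonAdj E b d ∧ NonAdj E c d := by
  classical
  constructor
  · rintro ⟨s, hs, hind : IsIndep E s⟩
    obtain ⟨a, t, hat, rfl, ht⟩ := card_eq_succ.1 hs
    obtain ⟨b, c, d, hbc, hbd, hcd, rfl⟩ := card_eq_three.1 ht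
    simp only [mem_insert, mem_singleton, not_or] at hat
    exact ⟨a, b, c, d, hind.nonAdj (by simp) (by simp) hat.1,
      hind.nonAdj (by simp) (by simp) hat.2.1, hind.nonAdj (by simp) (by simp) hat.2.2,
      hind.nonAdj (by simp) (by simp) hbc, hind.nonAdj (by simp) (by simp) hbd,
      hind.nonAdj (by simp) (by simp) hcd⟩
  · rintro ⟨a, b, c, d, hab, hac, had, hbc, hbd, hcd⟩
    refine ⟨{a, b, c, d}, ?_, ?_⟩
    · rw [card_insert_of_notMem, card_insert_of_notMem, card_pair hcd.1] <;>
        simp [hab.1, hac.1, had.1, hbc.1, hbd.1]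
    · simp only [mem_insert, mem_singleton]
      unfold NonAdj at *
      rintro x (rfl | rfl | rfl | rfl) y (rfl | rfl | rfl | rfl) <;>
        first | exact hE.irrefl _ | tauto

end Basic

section Neighbourhoods

variable {V : Type*} [Fintype V] (E : V → V → Prop) [DecidableRel E]

def outNbrs (v : V) : Finset V := {x | E v x}

def inNbrs (v : V) : Finset V := {x | E x v}

variable {E} in
@[simp] theorem mem_outNbrs {v x : V} : x ∈ outNbrs E v ↔ E v x := by simp [outNbrs]

variable {E} in
@[simp] theorem mem_inNbrs {v x : V} : x ∈ inNbrs E v ↔ E x v := by simp [inNbrs]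

variable [DecidableEq V]

instance : DecidableRel (NonAdj E) := fun _ _ => inferInstanceAs (Decidable (_ ∧ _))

def nonNbrs (v : V) : Finset V := {x | NonAdj E v x}

variable {E}

@[simp] theorem mem_nonNbrs {v x : V} : x ∈ nonNbrs E v ↔ NonAdj E v x := by simp [nonNbrs]

theorem mem_nonNbrs_comm {v x : V} : x ∈ nonNbrs E v ↔ v ∈ nonNbrs E x := by
  simp only [mem_nonNbrs]
  exact ⟨NonAdj.symm, NonAdj.symm⟩

theorem IsOriented.card_eq_card_inter_add (hE : IsOriented E) (s : Finset V) (u : V) :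
    #s = #(s ∩ outNbrs E u) + #(s ∩ inNbrs E u) + #(s ∩ nonNbrs E u) + #(s ∩ {u}) := by
  have := hE u
  rw [← card_union_of_disjoint, ← card_union_of_disjoint, ← card_union_of_disjoint]
  · congr 1
    ext x
    simp only [mem_union, mem_inter, mem_outNbrs, mem_inNbrs, mem_nonNbrs, mem_singleton, NonAdj]
    by_cases hx : x = u
    · subst hx; tauto
    · tauto
  all_goals
    simp only [disjoint_left, mem_union, mem_inter, mem_outNbrs, mem_inNbrs, mem_nonNbrs,
      mem_singleton, NonAdj]
    grind [hE.irrefl u]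

theorem sum_card_outNbrs_inter (s t : Finset V) :
    ∑ x ∈ s, #(outNbrs E x ∩ t) = ∑ y ∈ t, #(inNbrs E y ∩ s) := by
  convert sum_card_bipartiteAbove_eq_sum_card_bipartiteBelow E (s := s) (t := t) using 3
  · ext; simp [and_comm]
  · ext; simp [and_comm]

end Neighbourhoods

namespace IsI4L3Free

variable {V : Type*} [Fintype V] {E : V → V → Prop} [DecidableRel E]

theorem isIndep_outNbrs (hE : IsI4L3Free E) (v : V) : IsIndep E (outNbrs E v) :=
  fun x hx y hy hxy => hE.not_transitive v x y (mem_outNbrs.1 hx) hxy (mem_outNbrs.1 hy)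

theorem isIndep_inNbrs (hE : IsI4L3Free E) (v : V) : IsIndep E (inNbrs E v) :=
  fun x hx y hy hxy => hE.not_transitive x y v hxy (mem_inNbrs.1 hy) (mem_inNbrs.1 hx)

theorem card_outNbrs_le (hE : IsI4L3Free E) (v : V) : #(outNbrs E v) ≤ 3 :=
  hE.card_le_three (hE.isIndep_outNbrs v)

theorem card_inNbrs_le (hE : IsI4L3Free E) (v : V) : #(inNbrs E v) ≤ 3 :=
  hE.card_le_three (hE.isIndep_inNbrs v)

variable [DecidableEq V] {s : Finset V} {u v : V}

theorem card_le_two_of_subset_nonNbrs (hE : IsI4L3Free E) (hs : IsIndep E s)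
    (hsv : s ⊆ nonNbrs E v) : #s ≤ 2 := by
  have hv : v ∉ s := fun h => (mem_nonNbrs.1 (hsv h)).1 rfl
  have := hE.card_le_three <| hs.insert (hE.oriented.irrefl v) fun y hy =>
    ⟨(mem_nonNbrs.1 (hsv hy)).2.1, (mem_nonNbrs.1 (hsv hy)).2.2⟩
  rw [card_insert_of_notMem hv] at this
  omega

theorem not_nonAdj_of_mem_nonNbrs (hE : IsI4L3Free E) {x y z : V} (hx : x ∈ nonNbrs E v)
    (hy : y ∈ nonNbrs E v) (hz : z ∈ nonNbrs E v) (hxy : NonAdj E x y) (hxz : NonAdj E x z) :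
    ¬NonAdj E y z := fun hyz =>
  hE.not_hasIndep <| hE.oriented.hasIndep_four_iff.2
    ⟨v, x, y, z, mem_nonNbrs.1 hx, mem_nonNbrs.1 hy, mem_nonNbrs.1 hz, hxy, hxz, hyz⟩

theorem card_le_three_of_forall_not_nonAdj (hE : IsI4L3Free E)
    (hs : ∀ x ∈ s, ∀ y ∈ s, ¬NonAdj E x y) : #s ≤ 3 := by
  obtain rfl | ⟨u, hu⟩ := s.eq_empty_or_nonempty
  · simp
  have hone : ∀ t, IsIndep E t → #(s ∩ t) ≤ 1 := by
    intro t ht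
    refine card_le_one.2 fun x hx y hy => by_contra fun hxy => ?_
    rw [mem_inter] at hx hy
    exact hs x hx.1 y hy.1 ⟨hxy, ht x hx.2 y hy.2, ht y hy.2 x hx.2⟩
  have hnon : s ∩ nonNbrs E u = ∅ := by
    ext x
    simp only [mem_inter, mem_nonNbrs, notMem_empty, iff_false, not_and]
    exact hs u hu x
  have hsplit := hE.oriented.card_eq_card_inter_add s u
  rw [hnon, inter_singleton_of_mem hu, card_empty, card_singleton] at hsplit
  have := hone _ (hE.isIndep_outNbrs u)
  have := hone _ (hE.isIndep_inNbrs u)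
  omega

theorem card_nonNbrs_inter_outNbrs_le (hE : IsI4L3Free E) (v u : V) :
    #(nonNbrs E v ∩ outNbrs E u) ≤ 2 :=
  hE.card_le_two_of_subset_nonNbrs
    ((hE.isIndep_outNbrs u).mono inter_subset_right)
    inter_subset_left

theorem card_nonNbrs_inter_inNbrs_le (hE : IsI4L3Free E) (v u : V) :
    #(nonNbrs E v ∩ inNbrs E u) ≤ 2 :=
  hE.card_le_two_of_subset_nonNbrs
    ((hE.isIndep_inNbrs u).mono inter_subset_right)
    inter_subset_left

theorem card_nonNbrs_inter_nonNbrs_le (hE : IsI4L3Free E) (hu : u ∈ nonNbrs E v) :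
    #(nonNbrs E v ∩ nonNbrs E u) ≤ 3 := by
  refine hE.card_le_three_of_forall_not_nonAdj fun x hx y hy => ?_
  simp only [mem_inter] at hx hy
  exact hE.not_nonAdj_of_mem_nonNbrs hu hx.1 hy.1 (mem_nonNbrs.1 hx.2) (mem_nonNbrs.1 hy.2)

theorem card_nonNbrs_le (hE : IsI4L3Free E) (v : V) : #(nonNbrs E v) ≤ 8 := by
  obtain h | ⟨u, hu⟩ := (nonNbrs E v).eq_empty_or_nonempty
  · simp [h]
  have hsplit := hE.oriented.card_eq_card_inter_add (nonNbrs E v) u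
  rw [inter_singleton_of_mem hu, card_singleton] at hsplit
  have := hE.card_nonNbrs_inter_outNbrs_le v u
  have := hE.card_nonNbrs_inter_inNbrs_le v u
  have := hE.card_nonNbrs_inter_nonNbrs_le hu
  omega

theorem card_eq_card_outNbrs_add (hE : IsI4L3Free E) (v : V) :
    Fintype.card V = #(outNbrs E v) + #(inNbrs E v) + #(nonNbrs E v) + 1 := by
  simpa using hE.oriented.card_eq_card_inter_add univ v

theorem card_le_fifteen (hE : IsI4L3Free E) : Fintype.card V ≤ 15 := by
  cases isEmpty_or_nonempty V with
  | inl _ => simp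
  | inr h =>
    obtain ⟨v⟩ := h
    have := hE.card_eq_card_outNbrs_add v
    have := hE.card_outNbrs_le v
    have := hE.card_inNbrs_le v
    have := hE.card_nonNbrs_le v
    omega

theorem card_outNbrs_inNbrs_nonNbrs_eq (hE : IsI4L3Free E) (hV : Fintype.card V = 15) (v : V) :
    #(outNbrs E v) = 3 ∧ #(inNbrs E v) = 3 ∧ #(nonNbrs E v) = 8 := by
  have := hE.card_eq_card_outNbrs_add v
  have := hE.card_outNbrs_le v
  have := hE.card_inNbrs_le v
  have := hE.card_nonNbrs_le v
  omega

theorem card_nonNbrs_inter_eq (hE : IsI4L3Free E) (hV : Fintype.card V = 15)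
    (hu : u ∈ nonNbrs E v) :
    #(nonNbrs E v ∩ outNbrs E u) = 2 ∧ #(nonNbrs E v ∩ inNbrs E u) = 2 ∧
      #(nonNbrs E v ∩ nonNbrs E u) = 3 := by
  have hsplit := hE.oriented.card_eq_card_inter_add (nonNbrs E v) u
  rw [(hE.card_outNbrs_inNbrs_nonNbrs_eq hV v).2.2, inter_singleton_of_mem hu,
    card_singleton] at hsplit
  have := hE.card_nonNbrs_inter_outNbrs_le v u
  have := hE.card_nonNbrs_inter_inNbrs_le v u
  have := hE.card_nonNbrs_inter_nonNbrs_le hu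
  omega

theorem card_inNbrs_inter_nonNbrs (hE : IsI4L3Free E) (hV : Fintype.card V = 15) {o : V}
    (ho : o ∈ outNbrs E v) : #(inNbrs E o ∩ nonNbrs E v) = 2 := by
  rw [mem_outNbrs] at ho
  have hout : inNbrs E o ∩ outNbrs E v = ∅ := by
    ext x
    simp only [mem_inter, mem_inNbrs, mem_outNbrs, notMem_empty, iff_false, not_and]
    exact fun hxo hvx => hE.not_transitive v x o hvx hxo ho
  have hin : inNbrs E o ∩ inNbrs E v = ∅ := by
    ext x
    simp only [mem_inter, mem_inNbrs, notMem_empty, iff_false, not_and]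
    exact fun hxo hxv => hE.not_transitive x v o hxv ho hxo
  have := hE.oriented.card_eq_card_inter_add (inNbrs E o) v
  rw [hout, hin, inter_singleton_of_mem (mem_inNbrs.2 ho),
    (hE.card_outNbrs_inNbrs_nonNbrs_eq hV o).2.1] at this
  simp only [card_empty, card_singleton] at this
  omega

theorem card_outNbrs_inter_add (hE : IsI4L3Free E) (hV : Fintype.card V = 15)
    (hu : u ∈ nonNbrs E v) :
    #(outNbrs E u ∩ outNbrs E v) + #(outNbrs E u ∩ inNbrs E v) = 1 := by
  have := hE.oriented.card_eq_card_inter_add (outNbrs E u) v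
  have hv : v ∉ outNbrs E u := fun h => (mem_nonNbrs.1 hu).2.2 (mem_outNbrs.1 h)
  rw [inter_singleton_of_notMem hv, inter_comm _ (nonNbrs E v),
    (hE.card_nonNbrs_inter_eq hV hu).1, (hE.card_outNbrs_inNbrs_nonNbrs_eq hV u).1] at this
  simp only [card_empty] at this
  omega

theorem sum_card_outNbrs_inter_inNbrs (hE : IsI4L3Free E) (hV : Fintype.card V = 15) (v : V) :
    ∑ u ∈ nonNbrs E v, #(outNbrs E u ∩ inNbrs E v) = 2 := by
  have hsplit : ∑ u ∈ nonNbrs E v,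
      (#(outNbrs E u ∩ outNbrs E v) + #(outNbrs E u ∩ inNbrs E v)) = 8 := by
    rw [sum_congr rfl fun u hu => hE.card_outNbrs_inter_add hV hu, sum_const,
      (hE.card_outNbrs_inNbrs_nonNbrs_eq hV v).2.2, smul_eq_mul, mul_one]
  have hout : ∑ u ∈ nonNbrs E v, #(outNbrs E u ∩ outNbrs E v) = 6 := by
    rw [sum_card_outNbrs_inter, sum_congr rfl fun o ho => hE.card_inNbrs_inter_nonNbrs hV ho,
      sum_const, (hE.card_outNbrs_inNbrs_nonNbrs_eq hV v).1, smul_eq_mul]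
  rw [sum_add_distrib, hout] at hsplit
  omega

variable {r : V}

theorem edge_of_forall_outNbrs_inter_inNbrs_eq_empty (hE : IsI4L3Free E) (hV : Fintype.card V = 15)
    (hr : r ∈ nonNbrs E v)
    (h : ∀ n ∈ nonNbrs E v ∩ nonNbrs E r, outNbrs E n ∩ inNbrs E v = ∅)
    {o i : V} (ho : o ∈ nonNbrs E r ∩ outNbrs E v) (hi : i ∈ nonNbrs E r ∩ inNbrs E v) :
    E o i := by
  rw [mem_inter, mem_inNbrs] at hi
  have hsub : nonNbrs E r ∩ inNbrs E i ⊆ nonNbrs E r ∩ outNbrs E v := by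
    intro x hx
    rw [mem_inter, mem_inNbrs] at hx
    rw [mem_inter]
    refine ⟨hx.1, ?_⟩
    rcases eq_or_adj_or_nonAdj E v x with rfl | hvx | hxv | hvx
    · exact absurd hi.2 (hE.oriented _ _ hx.2)
    · exact mem_outNbrs.2 hvx
    · exact absurd hx.2 (hE.isIndep_inNbrs v x (mem_inNbrs.2 hxv) i (mem_inNbrs.2 hi.2))
    · have := h x (mem_inter.2 ⟨mem_nonNbrs.2 hvx, hx.1⟩)
      exact absurd this (ne_empty_of_mem (mem_inter.2 ⟨mem_outNbrs.2 hx.2, mem_inNbrs.2 hi.2⟩))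
  have heq := eq_of_subset_of_card_le hsub <| by
    rw [(hE.card_nonNbrs_inter_eq hV hi.1).2.1,
      (hE.card_nonNbrs_inter_eq hV (mem_nonNbrs_comm.1 hr)).1]
  rw [← heq, mem_inter, mem_inNbrs] at ho
  exact ho.2

theorem exists_adj_of_mem_nonNbrs_inter (hE : IsI4L3Free E) (hV : Fintype.card V = 15)
    (hr : r ∈ nonNbrs E v) {n : V} (hn : n ∈ nonNbrs E r ∩ nonNbrs E v) :
    ∃ o ∈ nonNbrs E r ∩ outNbrs E v, E n o ∨ E o n := by
  by_contra! h
  rw [mem_inter] at hn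
  have hnO : n ∉ nonNbrs E r ∩ outNbrs E v := fun hnO =>
    (mem_nonNbrs.1 hn.2).2.1 (mem_outNbrs.1 (mem_inter.1 hnO).2)
  have hind : IsIndep E (insert n (nonNbrs E r ∩ outNbrs E v)) :=
    ((hE.isIndep_outNbrs v).mono inter_subset_right).insert (hE.oriented.irrefl n) h
  have := hE.card_le_two_of_subset_nonNbrs hind (insert_subset hn.1 inter_subset_left)
  rw [card_insert_of_notMem hnO, (hE.card_nonNbrs_inter_eq hV (mem_nonNbrs_comm.1 hr)).1] at this
  omega

theorem card_filter_adj_le_one (hE : IsI4L3Free E) (hV : Fintype.card V = 15)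
    (hr : r ∈ nonNbrs E v)
    (h : ∀ n ∈ nonNbrs E v ∩ nonNbrs E r, outNbrs E n ∩ inNbrs E v = ∅)
    {o : V} (ho : o ∈ nonNbrs E r ∩ outNbrs E v) :
    #{n ∈ nonNbrs E r ∩ nonNbrs E v | E n o ∨ E o n} ≤ 1 := by
  have hv := mem_nonNbrs_comm.1 hr
  rw [mem_inter, mem_outNbrs] at ho
  obtain ⟨hOo, hIo, -⟩ := hE.card_nonNbrs_inter_eq hV ho.1
  have hsub : insert v ((nonNbrs E r ∩ inNbrs E v) ∪
      {n ∈ nonNbrs E r ∩ nonNbrs E v | E n o ∨ E o n}) ⊆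
      (nonNbrs E r ∩ outNbrs E o) ∪ (nonNbrs E r ∩ inNbrs E o) := by
    intro x hx
    simp only [mem_insert, mem_union, mem_inter, mem_filter, mem_outNbrs, mem_inNbrs] at hx ⊢
    rcases hx with rfl | hi | ⟨⟨hxr, -⟩, hxo | hox⟩
    · exact Or.inr ⟨hv, ho.2⟩
    · exact Or.inl ⟨hi.1, hE.edge_of_forall_outNbrs_inter_inNbrs_eq_empty hV hr h
        (mem_inter.2 ⟨ho.1, mem_outNbrs.2 ho.2⟩) (mem_inter.2 ⟨hi.1, mem_inNbrs.2 hi.2⟩)⟩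
    · exact Or.inr ⟨hxr, hxo⟩
    · exact Or.inl ⟨hxr, hox⟩
  have hvx : v ∉ (nonNbrs E r ∩ inNbrs E v) ∪
      {n ∈ nonNbrs E r ∩ nonNbrs E v | E n o ∨ E o n} := by
    simp [hE.oriented.irrefl v, NonAdj]
  have hdisj : Disjoint (nonNbrs E r ∩ inNbrs E v)
      {n ∈ nonNbrs E r ∩ nonNbrs E v | E n o ∨ E o n} := by
    rw [disjoint_left]
    intro x hx hx'
    simp only [mem_inter, mem_inNbrs, mem_filter, mem_nonNbrs] at hx hx'
    exact hx'.1.2.2.2 hx.2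
  have := (card_le_card hsub).trans (card_union_le _ _)
  rw [card_insert_of_notMem hvx, card_union_of_disjoint hdisj,
    (hE.card_nonNbrs_inter_eq hV hv).2.1, hOo, hIo] at this
  omega

/- Otherwise every vertex of `R r ∩ Out v` dominates `R r ∩ In v`, which leaves it at most one
neighbour in `R r ∩ R v`; but each of the three vertices of `R r ∩ R v` has a neighbour in the
two-element set `R r ∩ Out v`. -/
theorem exists_outNbrs_inter_inNbrs_nonempty (hE : IsI4L3Free E) (hV : Fintype.card V = 15)
    (hr : r ∈ nonNbrs E v) :
    ∃ n ∈ nonNbrs E v ∩ nonNbrs E r, (outNbrs E n ∩ inNbrs E v).Nonempty := by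
  by_contra! h
  obtain ⟨hO, -, hN⟩ := hE.card_nonNbrs_inter_eq hV (mem_nonNbrs_comm.1 hr)
  have := card_nsmul_le_card_nsmul (fun n o => E n o ∨ E o n) (m := 1) (n := 1)
    (s := nonNbrs E r ∩ nonNbrs E v) (t := nonNbrs E r ∩ outNbrs E v)
    (fun n hn => by
      obtain ⟨o, ho, hadj⟩ := hE.exists_adj_of_mem_nonNbrs_inter hV hr hn
      exact one_le_card.2 ⟨o, (mem_bipartiteAbove _).2 ⟨ho, hadj⟩⟩)
    (fun o ho => hE.card_filter_adj_le_one hV hr h ho)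
  rw [hN, hO] at this
  simp at this

theorem card_le_fourteen (hE : IsI4L3Free E) : Fintype.card V ≤ 14 := by
  by_contra! hlt
  have hV : Fintype.card V = 15 := le_antisymm hE.card_le_fifteen hlt
  obtain ⟨v⟩ : Nonempty V := Fintype.card_pos_iff.1 (by omega)
  let w (n : V) : ℕ := #(outNbrs E n ∩ inNbrs E v)
  have hlow : ∀ r ∈ nonNbrs E v, 1 ≤ ∑ n ∈ nonNbrs E v ∩ nonNbrs E r, w n := by
    intro r hr
    obtain ⟨n, hn, hw⟩ := hE.exists_outNbrs_inter_inNbrs_nonempty hV hr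
    exact (one_le_card.2 hw).trans (single_le_sum (f := w) (fun _ _ => Nat.zero_le _) hn)
  have : 8 ≤ 6 := calc
    8 = #(nonNbrs E v) • 1 := by rw [(hE.card_outNbrs_inNbrs_nonNbrs_eq hV v).2.2]; rfl
    _ ≤ ∑ r ∈ nonNbrs E v, ∑ n ∈ nonNbrs E v ∩ nonNbrs E r, w n :=
      card_nsmul_le_sum _ _ _ hlow
    _ = ∑ n ∈ nonNbrs E v, ∑ r ∈ nonNbrs E v ∩ nonNbrs E n, w n :=
      sum_comm' fun r n => by simp only [mem_inter, mem_nonNbrs_comm (v := r)]; tauto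
    _ = ∑ n ∈ nonNbrs E v, 3 * w n := sum_congr rfl fun n hn => by
      rw [sum_const, (hE.card_nonNbrs_inter_eq hV hn).2.2, smul_eq_mul]
    _ = 3 * 2 := by rw [← mul_sum, hE.sum_card_outNbrs_inter_inNbrs hV v]
  omega

end IsI4L3Free

theorem IsOriented.hasIndep_four_or_exists_transitive {V : Type*} [Fintype V]
    {E : V → V → Prop} (hE : IsOriented E) (hV : 14 < Fintype.card V) :
    HasIndep E 4 ∨ ∃ a b c, E a b ∧ E b c ∧ E a c := by
  classical
  by_contra! h
  have := IsI4L3Free.card_le_fourteen ⟨hE, h.2, h.1⟩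
  omega

def extremalConn : Bool → Bool → Finset (ZMod 7)
  | false, false => {1, 3}
  | true, true => {1, 5}
  | _, _ => {3}

def extremalGraph (a b : ZMod 7 × Bool) : Prop := b.1 - a.1 ∈ extremalConn a.2 b.2

instance : DecidableRel extremalGraph := fun _ _ => inferInstanceAs (Decidable (_ ∈ _))

theorem extremalGraph_isOriented : IsOriented extremalGraph := by
  unfold IsOriented
  decide

theorem extremalGraph_not_transitive :
    ∀ a b c, extremalGraph a b → extremalGraph b c → ¬extremalGraph a c := by
  decide

def extremalShift (t : ZMod 7) (a : ZMod 7 × Bool) : ZMod 7 × Bool := (a.1 + t, a.2)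

theorem nonAdj_extremalShift (t : ZMod 7) (a b : ZMod 7 × Bool) :
    NonAdj extremalGraph (extremalShift t a) (extremalShift t b) ↔ NonAdj extremalGraph a b := by
  simp [NonAdj, extremalGraph, extremalShift, Prod.ext_iff]

set_option synthInstance.maxSize 1000 in
theorem extremalGraph_not_hasIndep : ¬HasIndep extremalGraph 4 := by
  have key : ∀ (e : Bool) (b c d : ZMod 7 × Bool), NonAdj extremalGraph (0, e) b →
      NonAdj extremalGraph (0, e) c → NonAdj extremalGraph (0, e) d →
      NonAdj extremalGraph b c → NonAdj extremalGraph b d → ¬NonAdj extremalGraph c d := by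
    decide
  -- `extremalShift t` is an automorphism, so it suffices to look at quadruples through `(0, e)`.
  rw [extremalGraph_isOriented.hasIndep_four_iff]
  rintro ⟨a, b, c, d, hab, hac, had, hbc, hbd, hcd⟩
  have ha : extremalShift (-a.1) a = (0, a.2) := by simp [extremalShift]
  have := key a.2 (extremalShift (-a.1) b) (extremalShift (-a.1) c) (extremalShift (-a.1) d)
  simp only [← ha, nonAdj_extremalShift] at this
  exact this hab hac had hbc hbd hcd

def ArrowsIL (m n k : ℕ) : Prop :=
  ∀ (V : Type) (_ : Fintype V), Fintype.card V = k →
    ∀ E : V → V → Prop, IsOriented E → HasIndep E m ∨ HasTransTour E n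

theorem ramseyIL_eq {m n k : ℕ} (hk : ArrowsIL m n k) (hlt : ∀ j < k, ¬ArrowsIL m n j) :
    ramseyIL m n = k :=
  le_antisymm (Nat.sInf_le hk) (le_csInf ⟨k, hk⟩ fun j hj => not_lt.1 fun h => hlt j h hj)

theorem arrowsIL_four_three_fifteen : ArrowsIL 4 3 15 := by
  intro V _ hV E hE
  refine (hE.hasIndep_four_or_exists_transitive (by omega)).imp_right ?_
  exact (hasTransTour_three_iff hE).2

theorem not_arrowsIL_four_three {k : ℕ} (hk : k ≤ 14) : ¬ArrowsIL 4 3 k := by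
  intro h
  obtain ⟨f⟩ := Function.Embedding.nonempty_of_card_le (α := Fin k) (β := ZMod 7 × Bool)
    (by simpa using hk)
  rcases h (Fin k) inferInstance (Fintype.card_fin k) (fun x y => extremalGraph (f x) (f y))
    (fun x y => extremalGraph_isOriented (f x) (f y)) with h | h
  · exact extremalGraph_not_hasIndep (h.of_comap f)
  · obtain ⟨a, b, c, hab, hbc, hac⟩ := (hasTransTour_three_iff extremalGraph_isOriented).1
      (h.of_comap f)
    exact extremalGraph_not_transitive a b c hab hbc hac

theorem stmt16 :
    ramseyIL 4 3 = 15 ∧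
    (∀ (V : Type) (_ : Fintype V) (E : V → V → Prop),
      Fintype.card V = 15 → IsOriented E →
      HasIndep E 4 ∨ ∃ a b c : V, E a b ∧ E b c ∧ E a c) ∧
    (∃ (V : Type) (_ : Fintype V) (E : V → V → Prop),
      Fintype.card V = 14 ∧ IsOriented E ∧ ¬ HasIndep E 4 ∧
        ¬ ∃ a b c : V, E a b ∧ E b c ∧ E a c) :=
  ⟨ramseyIL_eq arrowsIL_four_three_fifteen fun _ hj => not_arrowsIL_four_three (by omega),
    fun _ _ _ hV hE => hE.hasIndep_four_or_exists_transitive (by omega),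
    ZMod 7 × Bool, inferInstance, extremalGraph, rfl, extremalGraph_isOriented,
    extremalGraph_not_hasIndep, fun ⟨a, b, c, hab, hbc, hac⟩ =>
      extremalGraph_not_transitive a b c hab hbc hac⟩
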